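/- arXiv:1302.6950 — 2 statements merged into one kernel-verified Lean document; each statement's English description precedes it below -/
import Mathlib

section
/- For a square matrix T, positive integers l and N, S(N, T^l) = ∑_{lcm(l,t) = N·l} S(t, T), where S(m,T) := ∑_{g | m} μ(g) Tr(T^{m/g}) and the sum on the right is over positive integers t with lcm(l,t) = N·l. -/
open scoped ArithmeticFunction ArithmeticFunction.Moebius
open Finset

/-- `S(m, T) = ∑_{g | m} μ(g) · Tr(T^{m/g})`. -/
def SW {n : ℕ} (m : ℕ) (T : Matrix (Fin n) (Fin n) ℤ) : ℤ :=
  ∑ g ∈ m.divisors, (μ g : ℤ) * (T ^ (m / g)).trace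

lemma trace_eq_sum_SW {n : ℕ} (T : Matrix (Fin n) (Fin n) ℤ) :
    ∀ m > 0, (T ^ m).trace = ∑ d ∈ m.divisors, SW d T := by
  intro m hm
  refine ((ArithmeticFunction.sum_eq_iff_sum_mul_moebius_eq (f := fun d => SW d T)
    (g := fun m => (T ^ m).trace)).mpr (fun k _ => ?_) m hm).symm
  exact Nat.sum_divisorsAntidiagonal (fun a b => (μ a : ℤ) * (T ^ b).trace)

lemma sum_moebius_divisors (M : ℕ) :
    ∑ d ∈ M.divisors, (μ d : ℤ) = if M = 1 then 1 else 0 := by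
  have := congrArg (fun f => f M) ArithmeticFunction.moebius_mul_coe_zeta
  simp only [ArithmeticFunction.coe_mul_zeta_apply, ArithmeticFunction.one_apply] at this
  exact this

lemma key_iff {l N d e : ℕ} (hl : 0 < l) (hN : 0 < N) (h : d * e = N * l) :
    Nat.gcd N e = 1 ↔ Nat.lcm l d = N * l := by
  have hNl : 0 < N * l := Nat.mul_pos hN hl
  have hd : 0 < d := by
    rcases Nat.eq_zero_or_pos d with h0 | h0
    · simp [h0] at h; omega
    · exact h0
  constructor
  · intro hg
    have h1 : N * l ∣ e * Nat.lcm l d := by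
      calc N * l = d * e := h.symm
        _ ∣ Nat.lcm l d * e := mul_dvd_mul_right (Nat.dvd_lcm_right l d) e
        _ = e * Nat.lcm l d := mul_comm _ _
    have h2 : N * l ∣ N * Nat.lcm l d := mul_dvd_mul_left N (Nat.dvd_lcm_left l d)
    have h3 : N * l ∣ Nat.lcm l d := by
      have := Nat.dvd_gcd h1 h2
      rwa [Nat.gcd_mul_right, Nat.gcd_comm e N, hg, one_mul] at this
    refine Nat.dvd_antisymm ?_ h3
    exact Nat.lcm_dvd (dvd_mul_left l N) ⟨e, h.symm⟩
  · intro hL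
    set g := Nat.gcd N e with hgdef
    have hgN : g ∣ N := Nat.gcd_dvd_left N e
    have hge : g ∣ e := Nat.gcd_dvd_right N e
    have hgpos : 0 < g := Nat.gcd_pos_of_pos_left e hN
    have hNg : 0 < N / g := Nat.div_pos (Nat.le_of_dvd hN hgN) hgpos
    have hkey : d * (e / g) = (N / g) * l := by
      apply Nat.eq_of_mul_eq_mul_right hgpos
      calc d * (e / g) * g = d * (e / g * g) := by ring
        _ = d * e := by rw [Nat.div_mul_cancel hge]
        _ = N * l := h
        _ = N / g * g * l := by rw [Nat.div_mul_cancel hgN]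
        _ = N / g * l * g := by ring
    have hdvd : N * l ∣ (N / g) * l := by
      rw [← hL]
      exact Nat.lcm_dvd (dvd_mul_left l (N / g)) ⟨e / g, hkey.symm⟩
    have hdvd2 : (N / g) * l ∣ N * l := mul_dvd_mul_right (Nat.div_dvd_of_dvd hgN) l
    have heq : (N / g) * l = N * l := Nat.dvd_antisymm hdvd2 hdvd
    have : N / g = N := Nat.eq_of_mul_eq_mul_right hl heq
    have : g * (N / g) = g * N := by rw [this]
    rw [Nat.mul_div_cancel' hgN] at this
    nlinarith

theorem stmt3 {n : ℕ} (T : Matrix (Fin n) (Fin n) ℤ) (l N : ℕ)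
    (hl : 0 < l) (hN : 0 < N) :
    SW N (T ^ l) =
      ∑ t ∈ (N * l).divisors.filter (fun t => Nat.lcm l t = N * l), SW t T := by
  have hNl : N * l ≠ 0 := Nat.mul_ne_zero hN.ne' hl.ne'
  calc SW N (T ^ l)
      = ∑ g ∈ N.divisors, (μ g : ℤ) * (T ^ (l * (N / g))).trace := by
        unfold SW
        exact sum_congr rfl fun g hg => by rw [← pow_mul]
    _ = ∑ g ∈ N.divisors, ∑ d ∈ (N * l).divisors,
          if d ∣ l * (N / g) then (μ g : ℤ) * SW d T else 0 := by
        refine sum_congr rfl fun g hg => ?_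
        obtain ⟨hgN, hN0⟩ := Nat.mem_divisors.mp hg
        have hpos : 0 < l * (N / g) :=
          Nat.mul_pos hl (Nat.div_pos (Nat.le_of_dvd hN hgN) (Nat.pos_of_dvd_of_pos hgN hN))
        have hdvd : l * (N / g) ∣ N * l := by
          rw [mul_comm N l]
          exact mul_dvd_mul_left l (Nat.div_dvd_of_dvd hgN)
        rw [trace_eq_sum_SW T _ hpos, Finset.mul_sum,
          ← Nat.divisors_filter_dvd_of_dvd hNl hdvd, Finset.sum_filter]
    _ = ∑ d ∈ (N * l).divisors, ∑ g ∈ N.divisors,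
          if d ∣ l * (N / g) then (μ g : ℤ) * SW d T else 0 := Finset.sum_comm
    _ = ∑ d ∈ (N * l).divisors, (if Nat.lcm l d = N * l then (1 : ℤ) else 0) * SW d T := by
        refine sum_congr rfl fun d hd => ?_
        obtain ⟨hdNl, _⟩ := Nat.mem_divisors.mp hd
        have hdpos : 0 < d := Nat.pos_of_dvd_of_pos hdNl (Nat.pos_of_ne_zero hNl)
        set M := Nat.gcd N (N * l / d) with hM
        have hcond : ∀ g ∈ N.divisors, (d ∣ l * (N / g) ↔ g ∣ M) := by
          intro g hg
          obtain ⟨hgN, _⟩ := Nat.mem_divisors.mp hg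
          have hgpos : 0 < g := Nat.pos_of_dvd_of_pos hgN hN
          have hgh : g * (N / g) = N := Nat.mul_div_cancel' hgN
          have hmul : l * (N / g) * g = N * l := by
            rw [mul_assoc, Nat.div_mul_cancel hgN, mul_comm]
          have step1 : d ∣ l * (N / g) ↔ d * g ∣ N * l := by
            constructor
            · intro hdl
              have := mul_dvd_mul_right hdl g
              rwa [hmul] at this
            · intro hdl
              rw [← hmul] at hdl
              exact (Nat.mul_dvd_mul_iff_right hgpos).mp hdl
          have step2 : d * g ∣ N * l ↔ g ∣ N * l / d := (Nat.dvd_div_iff_mul_dvd hdNl).symm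
          rw [step1, step2, hM]
          exact ⟨fun h1 => Nat.dvd_gcd hgN h1, fun h1 => h1.trans (Nat.gcd_dvd_right _ _)⟩
        have hMdvd : M ∣ N := Nat.gcd_dvd_left _ _
        have hMiff : M = 1 ↔ Nat.lcm l d = N * l :=
          key_iff hl hN (Nat.mul_div_cancel' hdNl)
        rw [← Finset.sum_filter, Finset.filter_congr hcond,
          Nat.divisors_filter_dvd_of_dvd hN.ne' hMdvd, ← Finset.sum_mul,
          sum_moebius_divisors]
        congr 1
        simp only [hMiff]
    _ = ∑ t ∈ (N * l).divisors.filter (fun t => Nat.lcm l t = N * l), SW t T := by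
        rw [Finset.sum_filter]
        exact sum_congr rfl fun d _ => by split <;> simp
end

section
/- For a square matrix T and positive integers l, N: Ω(N, T^l) = ∑_{lcm(l,t)=N·l} (t/N)·Ω(t, T), where Ω(m,T) := (1/m)∑_{g|m} μ(g) Tr(T^{m/g}) and the sum is over positive integers t with lcm(l,t) = N·l. -/
open scoped ArithmeticFunction
open scoped ArithmeticFunction.Moebius

/-- `Ω(m, T) = (1/m) ∑_{g | m} μ(g) · Tr(T^{m/g})` as a rational number. -/
noncomputable def OmegaW {n : ℕ} (m : ℕ) (T : Matrix (Fin n) (Fin n) ℤ) : ℚ :=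
  (1 / (m : ℚ)) * ∑ g ∈ m.divisors, (μ g : ℚ) * ((T ^ (m / g)).trace : ℚ)

lemma omega_step {n : ℕ} (T : Matrix (Fin n) (Fin n) ℤ) :
    ∀ m : ℕ, m > 0 → ∑ x ∈ m.divisorsAntidiagonal,
        (μ x.fst : ℚ) * ((T ^ x.snd).trace : ℚ) = (m : ℚ) * OmegaW m T := by
  intro m hm
  rw [Nat.sum_divisorsAntidiagonal (fun a b => (μ a : ℚ) * ((T ^ b).trace : ℚ))]
  unfold OmegaW
  rw [← mul_assoc, mul_one_div, div_self (by positivity), one_mul]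

lemma omega_inv {n : ℕ} (T : Matrix (Fin n) (Fin n) ℤ) :
    ∀ m : ℕ, m > 0 → ∑ d ∈ m.divisors, (d : ℚ) * OmegaW d T = ((T ^ m).trace : ℚ) := by
  rw [ArithmeticFunction.sum_eq_iff_sum_mul_moebius_eq]
  exact omega_step T

lemma omega_fibers {n : ℕ} (T : Matrix (Fin n) (Fin n) ℤ) (l : ℕ) (hl : 0 < l) :
    ∀ m : ℕ, m > 0 →
      ∑ d ∈ m.divisors,
        ∑ t ∈ (d * l).divisors.filter (fun t => Nat.lcm l t = d * l),
          (t : ℚ) * OmegaW t T = (((T ^ l) ^ m).trace : ℚ) := by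
  intro m hm
  rw [← pow_mul]
  have key : ∀ d ∈ m.divisors,
      (d * l).divisors.filter (fun t => Nat.lcm l t = d * l)
        = (m * l).divisors.filter (fun t => Nat.lcm l t / l = d) := by
    intro d hd
    obtain ⟨hdm, hm0⟩ := Nat.mem_divisors.mp hd
    have hd0 : 0 < d := Nat.pos_of_mem_divisors hd
    ext t
    simp only [Finset.mem_filter, Nat.mem_divisors]
    constructor
    · rintro ⟨⟨ht, h0⟩, hlcm⟩
      refine ⟨⟨ht.trans (Nat.mul_dvd_mul_right hdm l), by positivity⟩, ?_⟩
      rw [hlcm, Nat.mul_div_assoc d (dvd_refl l), Nat.div_self hl, mul_one]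
    · rintro ⟨⟨ht, h0⟩, hlcm⟩
      have hld : l ∣ Nat.lcm l t := Nat.dvd_lcm_left _ _
      have hlcm' : Nat.lcm l t = d * l := by
        rw [← hlcm, Nat.div_mul_cancel hld]
      exact ⟨⟨hlcm' ▸ Nat.dvd_lcm_right l t, by positivity⟩, hlcm'⟩
  rw [Finset.sum_congr rfl fun d hd => by rw [key d hd]]
  have hmaps : ∀ x ∈ (m * l).divisors, Nat.lcm l x / l ∈ m.divisors := by
    intro x hx
    obtain ⟨hxd, h0⟩ := Nat.mem_divisors.mp hx
    have hld : l ∣ Nat.lcm l x := Nat.dvd_lcm_left _ _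
    have hlcmd : Nat.lcm l x ∣ l * m := Nat.lcm_dvd ⟨m, by ring⟩ (by rwa [mul_comm] at hxd)
    have h1 : l * (Nat.lcm l x / l) = Nat.lcm l x := Nat.mul_div_cancel' hld
    have h2 : l * (Nat.lcm l x / l) ∣ l * m := by rw [h1]; exact hlcmd
    exact Nat.mem_divisors.mpr ⟨(Nat.mul_dvd_mul_iff_left hl).mp h2, hm.ne'⟩
  rw [Finset.sum_fiberwise_of_maps_to hmaps (fun t => (t : ℚ) * OmegaW t T)]
  rw [mul_comm l m]
  exact omega_inv T (m * l) (by positivity)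

theorem stmt6 {n : ℕ} (T : Matrix (Fin n) (Fin n) ℤ) (l N : ℕ)
    (hl : 0 < l) (hN : 0 < N) :
    OmegaW N (T ^ l) =
      ∑ t ∈ (N * l).divisors.filter (fun t => Nat.lcm l t = N * l),
        ((t : ℚ) / (N : ℚ)) * OmegaW t T := by
  have h1 := (ArithmeticFunction.sum_eq_iff_sum_mul_moebius_eq
      (f := fun d => ∑ t ∈ (d * l).divisors.filter (fun t => Nat.lcm l t = d * l),
          (t : ℚ) * OmegaW t T)
      (g := fun m => (((T ^ l) ^ m).trace : ℚ))).mp (omega_fibers T l hl) N hN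
  have h2 := omega_step (T ^ l) N hN
  rw [h2] at h1
  have hN' : (N : ℚ) ≠ 0 := by positivity
  calc OmegaW N (T ^ l) = (1 / (N : ℚ)) * ((N : ℚ) * OmegaW N (T ^ l)) := by
        field_simp
    _ = (1 / (N : ℚ)) * ∑ t ∈ (N * l).divisors.filter (fun t => Nat.lcm l t = N * l),
          (t : ℚ) * OmegaW t T := by rw [h1]
    _ = _ := by
        rw [Finset.mul_sum]
        exact Finset.sum_congr rfl fun t _ => by ring
end
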